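/- For every μ > -1/2 and z ∈ ℝ, the Bessel function of the first kind satisfies Poisson's integral representation J_μ(z) = ((z/2)^μ/(√π·Γ(μ+1/2)))·∫_{-1}^{1}(1-w²)^{μ-1/2}·cos(zw) dw. -/

import Mathlib

/-!
Expand `cos (z w)` in its Taylor series and integrate term by term, the series being dominated by
`cosh (z w) · (1 - w²)^(μ - 1/2)`. The substitution `t = w²` turns the even moments
`∫_{-1}^{1} (1 - w²)^(μ - 1/2) w^(2k) dw` into the Beta integrals `B(k + 1/2, μ + 1/2)`, and
`Γ(k + 1/2) = √π (2k)! / (4^k k!)` turns the resulting series into the power series of `J_μ`.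
-/

open MeasureTheory Real Set

/-- The Bessel function of the first kind of (real) order `μ`, via its power series. -/
noncomputable def besselJ (μ z : ℝ) : ℝ :=
  ∑' k : ℕ, (-1) ^ k * (z / 2) ^ (μ + 2 * k) / (k.factorial * Real.Gamma (μ + k + 1))

lemma Real.Gamma_nat_add_half_eq_factorial (k : ℕ) :
    Gamma (k + 1 / 2) = √π * (2 * k).factorial / (4 ^ k * k.factorial) := by
  induction k with
  | zero => norm_num [Gamma_one_half_eq]
  | succ n ih =>
    rw [show ((n + 1 : ℕ) : ℝ) + 1 / 2 = (n + 1 / 2) + 1 by push_cast; ring,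
      Gamma_add_one (by positivity), ih, show 2 * (n + 1) = 2 * n + 1 + 1 by ring,
      Nat.factorial_succ, Nat.factorial_succ, Nat.factorial_succ]
    push_cast
    field_simp
    ring

lemma Real.rpow_add_natCast_of_neg_one_lt {x y : ℝ} (hy : -1 < y) (n : ℕ) :
    x ^ (y + n) = x ^ y * x ^ n := by
  rcases eq_or_ne x 0 with rfl | hx
  · rcases Nat.eq_zero_or_pos n with rfl | hn
    · simp
    · have : (1 : ℝ) ≤ n := by exact_mod_cast hn
      rw [zero_rpow (by linarith), zero_pow hn.ne', mul_zero]
  · exact rpow_add_natCast hx y n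

lemma ofReal_beta_integrand {a b x : ℝ} (hx : x ∈ uIcc 0 1) :
    ((x ^ (a - 1) * (1 - x) ^ (b - 1) : ℝ) : ℂ)
      = (x : ℂ) ^ ((a : ℂ) - 1) * (1 - (x : ℂ)) ^ ((b : ℂ) - 1) := by
  rw [uIcc_of_le zero_le_one] at hx
  push_cast
  rw [Complex.ofReal_cpow hx.1, Complex.ofReal_cpow (sub_nonneg.mpr hx.2)]
  push_cast
  rfl

lemma intervalIntegrable_beta_integrand {a b : ℝ} (ha : 0 < a) (hb : 0 < b) :
    IntervalIntegrable (fun x : ℝ => x ^ (a - 1) * (1 - x) ^ (b - 1)) volume 0 1 := by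
  have h := Complex.betaIntegral_convergent (u := a) (v := b) (by simpa) (by simpa)
  refine (intervalIntegrable_congr fun x hx => ?_).mp
    (⟨h.1.re, h.2.re⟩ : IntervalIntegrable _ _ _ _)
  simp [← ofReal_beta_integrand (uIoc_subset_uIcc hx)]

lemma integral_beta_integrand {a b : ℝ} (ha : 0 < a) (hb : 0 < b) :
    ∫ x in (0:ℝ)..1, x ^ (a - 1) * (1 - x) ^ (b - 1) = Gamma a * Gamma b / Gamma (a + b) := by
  have h := Complex.betaIntegral_eq_Gamma_mul_div (u := a) (v := b) (by simpa) (by simpa)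
  rw [Complex.betaIntegral,
    ← intervalIntegral.integral_congr (fun x hx => ofReal_beta_integrand hx),
    intervalIntegral.integral_ofReal, ← Complex.ofReal_add, Complex.Gamma_ofReal,
    Complex.Gamma_ofReal, Complex.Gamma_ofReal] at h
  exact_mod_cast h

lemma image_sq_Ioo_zero_one : (fun x : ℝ => x ^ 2) '' Ioo 0 1 = Ioo 0 1 := by
  ext y
  simp only [mem_image, mem_Ioo]
  constructor
  · rintro ⟨x, ⟨h0, h1⟩, rfl⟩
    exact ⟨by positivity, by nlinarith⟩
  · rintro ⟨h0, h1⟩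
    exact ⟨√y, ⟨sqrt_pos.mpr h0, (sqrt_lt' one_pos).mpr (by rwa [one_pow])⟩,
      sq_sqrt h0.le⟩

lemma injOn_sq_Ioo_zero_one : InjOn (fun x : ℝ => x ^ 2) (Ioo 0 1) :=
  fun _ hx _ hy h => (pow_left_inj₀ hx.1.le hy.1.le two_ne_zero).mp h

lemma hasDerivWithinAt_sq_Ioo_zero_one :
    ∀ x ∈ Ioo (0:ℝ) 1, HasDerivWithinAt (fun x : ℝ => x ^ 2) (2 * x) (Ioo 0 1) x :=
  fun x _ => by simpa using (hasDerivAt_pow 2 x).hasDerivWithinAt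

section

variable {E : Type*} [NormedAddCommGroup E]

lemma abs_deriv_smul_comp_sq_eqOn [NormedSpace ℝ E] (g : ℝ → E) :
    EqOn (fun x => |2 * x| • g (x ^ 2)) (fun x => (2 * x) • g (x ^ 2)) (Ioo 0 1) :=
  fun x hx => by simp only [abs_of_pos (mul_pos two_pos hx.1)]

lemma intervalIntegrable_comp_sq_iff [NormedSpace ℝ E] (g : ℝ → E) :
    IntervalIntegrable (fun x => (2 * x) • g (x ^ 2)) volume 0 1 ↔
      IntervalIntegrable g volume 0 1 := by
  have h := integrableOn_image_iff_integrableOn_abs_deriv_smul measurableSet_Ioo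
    hasDerivWithinAt_sq_Ioo_zero_one injOn_sq_Ioo_zero_one g
  rw [image_sq_Ioo_zero_one, integrableOn_congr_fun (abs_deriv_smul_comp_sq_eqOn g)
    measurableSet_Ioo] at h
  rw [intervalIntegrable_iff_integrableOn_Ioo_of_le (f := g) zero_le_one,
    intervalIntegrable_iff_integrableOn_Ioo_of_le zero_le_one, h]

lemma integral_comp_sq [NormedSpace ℝ E] (g : ℝ → E) :
    ∫ x in (0:ℝ)..1, (2 * x) • g (x ^ 2) = ∫ t in (0:ℝ)..1, g t := by
  have h := integral_image_eq_integral_abs_deriv_smul measurableSet_Ioo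
    hasDerivWithinAt_sq_Ioo_zero_one injOn_sq_Ioo_zero_one g
  rw [image_sq_Ioo_zero_one, setIntegral_congr_fun measurableSet_Ioo
    (abs_deriv_smul_comp_sq_eqOn g)] at h
  simp only [intervalIntegral.integral_of_le zero_le_one, integral_Ioc_eq_integral_Ioo, h]

lemma intervalIntegrable_neg_self_of_even {f : ℝ → E} (hf : ∀ x, f (-x) = f x) {a : ℝ}
    (hint : IntervalIntegrable f volume 0 a) : IntervalIntegrable f volume (-a) a := by
  have := (IntervalIntegrable.iff_comp_neg).mp hint
  simp only [hf, neg_zero] at this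
  exact this.symm.trans hint

lemma integral_neg_self_of_even [NormedSpace ℝ E] {f : ℝ → E} (hf : ∀ x, f (-x) = f x)
    {a : ℝ} (hint : IntervalIntegrable f volume 0 a) :
    ∫ x in -a..a, f x = 2 • ∫ x in 0..a, f x := by
  have hleft : ∫ x in -a..0, f x = ∫ x in 0..a, f x := by
    simpa [hf] using (intervalIntegral.integral_comp_neg (a := 0) (b := a) f).symm
  rw [← intervalIntegral.integral_add_adjacent_intervals
    ((intervalIntegrable_neg_self_of_even hf hint).trans hint.symm) hint, hleft, two_nsmul]

end

lemma one_sub_sq_rpow_mul_pow_eq_half_smul {x : ℝ} (hx : 0 < x) (a : ℝ) (k : ℕ) :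
    (1 - x ^ 2) ^ (a - 1) * x ^ (2 * k)
      = 2⁻¹ * ((2 * x) • ((x ^ 2) ^ ((k + 1 / 2 : ℝ) - 1) * (1 - x ^ 2) ^ (a - 1))) := by
  have hpow : (x ^ 2) ^ ((k + 1 / 2 : ℝ) - 1) = x ^ (2 * k) / x := by
    rw [← rpow_natCast x 2, ← rpow_mul hx.le,
      show (2:ℕ) * ((k + 1 / 2 : ℝ) - 1) = (2 * k : ℕ) - 1 by push_cast; ring,
      rpow_sub_one hx.ne', rpow_natCast]
  rw [hpow, smul_eq_mul]
  field_simp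

lemma half_smul_eqOn_one_sub_sq_rpow_mul_pow (a : ℝ) (k : ℕ) :
    EqOn (fun x : ℝ =>
        2⁻¹ * ((2 * x) • ((x ^ 2) ^ ((k + 1 / 2 : ℝ) - 1) * (1 - x ^ 2) ^ (a - 1))))
      (fun x => (1 - x ^ 2) ^ (a - 1) * x ^ (2 * k)) (uIoc 0 1) :=
  fun _ hx =>
    (one_sub_sq_rpow_mul_pow_eq_half_smul (uIoc_of_le (zero_le_one (α := ℝ)) ▸ hx).1 a k).symm

lemma intervalIntegrable_one_sub_sq_rpow_mul_pow_zero_one {a : ℝ} (ha : 0 < a) (k : ℕ) :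
    IntervalIntegrable (fun x : ℝ => (1 - x ^ 2) ^ (a - 1) * x ^ (2 * k)) volume 0 1 :=
  (intervalIntegrable_congr (half_smul_eqOn_one_sub_sq_rpow_mul_pow a k)).mp <|
    IntervalIntegrable.const_mul ((intervalIntegrable_comp_sq_iff _).mpr
      (intervalIntegrable_beta_integrand (by positivity) ha)) _

lemma one_sub_sq_rpow_mul_pow_neg (a : ℝ) (k : ℕ) (x : ℝ) :
    (1 - (-x) ^ 2) ^ (a - 1) * (-x) ^ (2 * k) = (1 - x ^ 2) ^ (a - 1) * x ^ (2 * k) := by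
  rw [neg_sq, pow_mul, pow_mul, neg_sq]

lemma intervalIntegrable_one_sub_sq_rpow_mul_pow {a : ℝ} (ha : 0 < a) (k : ℕ) :
    IntervalIntegrable (fun x : ℝ => (1 - x ^ 2) ^ (a - 1) * x ^ (2 * k)) volume (-1) 1 :=
  intervalIntegrable_neg_self_of_even (one_sub_sq_rpow_mul_pow_neg a k)
    (intervalIntegrable_one_sub_sq_rpow_mul_pow_zero_one ha k)

lemma integral_one_sub_sq_rpow_mul_pow {a : ℝ} (ha : 0 < a) (k : ℕ) :
    ∫ x in (-1:ℝ)..1, (1 - x ^ 2) ^ (a - 1) * x ^ (2 * k)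
      = Gamma (k + 1 / 2) * Gamma a / Gamma (k + 1 / 2 + a) := by
  rw [integral_neg_self_of_even (one_sub_sq_rpow_mul_pow_neg a k)
    (intervalIntegrable_one_sub_sq_rpow_mul_pow_zero_one ha k),
    ← intervalIntegral.integral_congr_ae (Filter.Eventually.of_forall fun x hx =>
      half_smul_eqOn_one_sub_sq_rpow_mul_pow a k hx),
    nsmul_eq_mul, intervalIntegral.integral_const_mul,
    integral_comp_sq fun t => t ^ ((k + 1 / 2 : ℝ) - 1) * (1 - t) ^ (a - 1),
    integral_beta_integrand (by positivity) ha]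
  ring

theorem intervalIntegral.hasSum_integral_mul_cos {f : ℝ → ℝ} {a b : ℝ}
    (hf : IntervalIntegrable f volume a b) (z : ℝ) :
    HasSum
      (fun k : ℕ => (-1) ^ k * z ^ (2 * k) / (2 * k).factorial * ∫ x in a..b, f x * x ^ (2 * k))
      (∫ x in a..b, f x * cos (z * x)) := by
  have hterm : ∀ (k : ℕ) (x : ℝ), f x * ((-1) ^ k * (z * x) ^ (2 * k) / (2 * k).factorial)
      = (-1) ^ k * z ^ (2 * k) / (2 * k).factorial * (f x * x ^ (2 * k)) := fun k x => by ring
  simp_rw [← intervalIntegral.integral_const_mul, ← hterm]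
  refine intervalIntegral.hasSum_integral_of_dominated_convergence
    (fun k x => (z * x) ^ (2 * k) / (2 * k).factorial * ‖f x‖) (fun k => ?_)
    (fun k => Filter.Eventually.of_forall fun x _ => ?_)
    (Filter.Eventually.of_forall fun x _ => ((hasSum_cosh (z * x)).mul_right _).summable) ?_
    (Filter.Eventually.of_forall fun x _ => (hasSum_cos (z * x)).mul_left (f x))
  · exact (hf.mul_continuousOn (by fun_prop)).def'.aestronglyMeasurable
  · rw [norm_mul, norm_div, norm_mul, norm_pow, norm_neg, norm_one, one_pow, one_mul,
      Real.norm_of_nonneg ((even_two_mul k).pow_nonneg _), Real.norm_natCast, mul_comm]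
  · simp_rw [fun x => ((hasSum_cosh (z * x)).mul_right ‖f x‖).tsum_eq]
    exact hf.norm.continuousOn_mul (by fun_prop)

lemma besselJ_term_eq {μ : ℝ} (hμ : -1 / 2 < μ) (z : ℝ) (k : ℕ) :
    (-1) ^ k * (z / 2) ^ (μ + 2 * k) / (k.factorial * Gamma (μ + k + 1))
      = (z / 2) ^ μ / (√π * Gamma (μ + 1 / 2)) * ((-1) ^ k * z ^ (2 * k) / (2 * k).factorial
        * (Gamma (k + 1 / 2) * Gamma (μ + 1 / 2) / Gamma (k + 1 / 2 + (μ + 1 / 2)))) := by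
  have hsplit : (z / 2) ^ (μ + 2 * k) = (z / 2) ^ μ * (z ^ (2 * k) / 4 ^ k) := by
    have h := rpow_add_natCast_of_neg_one_lt (x := z / 2) (by linarith) (2 * k)
    push_cast at h
    rw [h, div_pow, pow_mul (2 : ℝ)]
    norm_num
  have hΓ : Gamma (μ + 1 / 2) ≠ 0 := (Gamma_pos_of_pos (by linarith)).ne'
  rw [hsplit, Gamma_nat_add_half_eq_factorial,
    show (k : ℝ) + 1 / 2 + (μ + 1 / 2) = μ + k + 1 by ring]
  -- otherwise `field_simp` normalises `μ + 1 / 2` inside `Gamma` and cannot cancel it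
  generalize Gamma (μ + 1 / 2) = G at hΓ ⊢
  field_simp

theorem stmt_15 (μ z : ℝ) (hμ : -1/2 < μ) :
    besselJ μ z = ((z / 2) ^ μ / (Real.sqrt Real.pi * Real.Gamma (μ + 1/2))) *
      ∫ w in (-1:ℝ)..1, (1 - w ^ 2) ^ (μ - 1/2) * Real.cos (z * w) := by
  have ha : 0 < μ + 1 / 2 := by linarith
  have hweight := intervalIntegrable_one_sub_sq_rpow_mul_pow ha 0
  simp only [mul_zero, pow_zero, mul_one] at hweight
  rw [show μ - 1 / 2 = μ + 1 / 2 - 1 by ring, besselJ,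
    ← (intervalIntegral.hasSum_integral_mul_cos hweight z).tsum_eq, ← tsum_mul_left]
  congr 1
  funext k
  rw [integral_one_sub_sq_rpow_mul_pow ha, besselJ_term_eq hμ]
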